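/- arXiv:1711.01542 — 3 statements merged into one kernel-verified Lean document; each statement's English description precedes it below -/
import Mathlib

section
/- Let a < b be extended reals, let A be differentiable and strictly decreasing on (a,b) with lim_{x→a⁺} A(x) = +∞ and lim_{x→b⁻} A(x) = 0, let B > 0 and let n be a positive natural number. Let ν be the probability measure on ℝ with density r ↦ (−A′(r))·B^n·(A(r))^{n−1}·exp(−B·A(r))/Γ(n) on (a,b) and 0 elsewhere (the distribution of the n-th lower record value R′ₙ from the type-II exponential family). Then the pushforward of ν under the map A is the Gamma distribution with shape n and rate B; that is, A(R′ₙ) ~ Gamma(n, rate B). -/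
/-!
The map `A` is a strictly decreasing bijection of `(a, b)` onto `(0, ∞)`, so the one-dimensional
change of variables `t = A r`, `dt = |A' r| dr`, carries the record density
`(-A' r) · B^n (A r)^(n-1) e^{-B A r} / Γ(n)` to the Gamma density `B^n t^(n-1) e^{-B t} / Γ(n)`.
-/

open MeasureTheory ProbabilityTheory Filter Set
open scoped Topology ENNReal

theorem MeasureTheory.map_restrict_withDensity_abs_deriv_mul_comp {s : Set ℝ} {f f' : ℝ → ℝ}
    (hs : MeasurableSet s) (hf : Measurable f) (hf' : ∀ x ∈ s, HasDerivWithinAt f (f' x) s x)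
    (hinj : InjOn f s) (g : ℝ → ℝ≥0∞) :
    ((volume.restrict s).withDensity fun x => ENNReal.ofReal |f' x| * g (f x)).map f =
      (volume.restrict (f '' s)).withDensity g := by
  ext t ht
  rw [Measure.map_apply hf ht, withDensity_apply _ (hf ht), withDensity_apply _ ht,
    Measure.restrict_restrict (hf ht), Measure.restrict_restrict ht, ← image_preimage_inter,
    lintegral_image_eq_lintegral_abs_deriv_mul ((hf ht).inter hs)
      (fun x hx => (hf' x hx.2).mono inter_subset_right) (hinj.mono inter_subset_right)]

theorem StrictAntiOn.pos_of_tendsto_zero {α : Type*} [Preorder α] {s : Set α} {f : α → ℝ}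
    {l : Filter α} [l.NeBot] (hf : StrictAntiOn f s) (hl : ∀ r ∈ s, ∀ᶠ y in l, y ∈ s ∧ r < y)
    (h0 : Tendsto f l (𝓝 0)) {r : α} (hr : r ∈ s) : 0 < f r := by
  have nonneg : ∀ r ∈ s, 0 ≤ f r := fun r hr =>
    le_of_tendsto h0 ((hl r hr).mono fun y hy => (hf hr hy.1 hy.2).le)
  obtain ⟨y, hys, hry⟩ := (hl r hr).exists
  exact (nonneg y hys).trans_lt (hf hr hys hry)

namespace EReal

variable {a b : EReal}

theorem comap_coe_nhdsGT_neBot (ha : a ≠ ⊤) : (comap ((↑) : ℝ → EReal) (𝓝[>] a)).NeBot := by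
  refine comap_neBot fun t ht => ?_
  obtain ⟨u, hau, hsub⟩ := (mem_nhdsGT_iff_exists_Ioo_subset' ha.lt_top).1 ht
  obtain ⟨x, hx⟩ := lt_iff_exists_real_btwn.1 hau
  exact ⟨x, hsub hx⟩

theorem comap_coe_nhdsLT_neBot (hb : b ≠ ⊥) : (comap ((↑) : ℝ → EReal) (𝓝[<] b)).NeBot := by
  refine comap_neBot fun t ht => ?_
  obtain ⟨l, hlb, hsub⟩ := (mem_nhdsLT_iff_exists_Ioo_subset' hb.bot_lt).1 ht
  obtain ⟨x, hx⟩ := lt_iff_exists_real_btwn.1 hlb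
  exact ⟨x, hsub hx⟩

theorem preimage_coe_Ioo_mem_comap_nhdsGT (hab : a < b) :
    (↑) ⁻¹' Ioo a b ∈ comap ((↑) : ℝ → EReal) (𝓝[>] a) :=
  preimage_mem_comap (Ioo_mem_nhdsGT hab)

theorem preimage_coe_Ioo_mem_comap_nhdsLT (hab : a < b) :
    (↑) ⁻¹' Ioo a b ∈ comap ((↑) : ℝ → EReal) (𝓝[<] b) :=
  preimage_mem_comap (Ioo_mem_nhdsLT hab)

theorem eventually_comap_coe_nhdsLT_mem_Ioo_and_gt {r : ℝ} (hr : (r : EReal) ∈ Ioo a b) :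
    ∀ᶠ y : ℝ in comap (↑) (𝓝[<] b), (y : EReal) ∈ Ioo a b ∧ r < y := by
  filter_upwards [preimage_coe_Ioo_mem_comap_nhdsLT (hr.1.trans hr.2),
    preimage_mem_comap (nhdsWithin_le_nhds (Ioi_mem_nhds hr.2))] with y hy hry
  exact ⟨hy, EReal.coe_lt_coe_iff.1 hry⟩

end EReal

theorem ProbabilityTheory.gammaPDFReal_natCast {n : ℕ} (hn : 0 < n) (r : ℝ) {x : ℝ}
    (hx : 0 ≤ x) : gammaPDFReal n r x = r ^ n * x ^ (n - 1) * Real.exp (-(r * x)) / Real.Gamma n := by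
  rw [gammaPDFReal, if_pos hx, ← Nat.cast_pred hn, Real.rpow_natCast, Real.rpow_natCast]
  ring

theorem ProbabilityTheory.restrict_Ioi_withDensity_gammaPDF (a r : ℝ) :
    (volume.restrict (Ioi 0)).withDensity (gammaPDF a r) = gammaMeasure a r := by
  rw [Measure.restrict_congr_set Ioi_ae_eq_Ici, ← withDensity_indicator measurableSet_Ici,
    gammaMeasure]
  congr 1
  funext x
  by_cases hx : 0 ≤ x
  · exact indicator_of_mem (mem_Ici.2 hx) _
  · rw [indicator_of_notMem (mt mem_Ici.1 hx), gammaPDF_of_neg (not_le.1 hx)]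

theorem record_pushforward_is_gamma_general (a b : EReal) (hab : a < b)
    (A A' : ℝ → ℝ) (B : ℝ) (n : ℕ) (hn : 0 < n)
    (hAmeas : Measurable A)
    (hderiv : ∀ x ∈ {x : ℝ | a < (x : EReal) ∧ (x : EReal) < b}, HasDerivAt A (A' x) x)
    (hAanti : StrictAntiOn A {x : ℝ | a < (x : EReal) ∧ (x : EReal) < b})
    (hAa : Tendsto A (Filter.comap (fun x : ℝ => (x : EReal)) (nhdsWithin a (Set.Ioi a)))
      Filter.atTop)
    (hAb : Tendsto A (Filter.comap (fun x : ℝ => (x : EReal)) (nhdsWithin b (Set.Iio b)))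
      (nhds 0))
    (ν : Measure ℝ)
    (hν : ν = volume.withDensity fun r : ℝ => ENNReal.ofReal
      (if a < (r : EReal) ∧ (r : EReal) < b then
        (-A' r) * B ^ n * (A r) ^ (n - 1) * Real.exp (-(B * A r)) / Real.Gamma n
      else 0)) :
    ν.map A = gammaMeasure (n : ℝ) B := by
  set s : Set ℝ := {x : ℝ | a < (x : EReal) ∧ (x : EReal) < b}
  have hs_open : IsOpen s := isOpen_Ioo.preimage continuous_coe_real_ereal
  have hs_conn : IsPreconnected s :=
    (ordConnected_Ioo.preimage_mono EReal.coe_strictMono.monotone).isPreconnected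
  have := EReal.comap_coe_nhdsGT_neBot hab.ne_top
  have := EReal.comap_coe_nhdsLT_neBot hab.ne_bot
  have hA_pos : ∀ r ∈ s, 0 < A r := fun r hr =>
    hAanti.pos_of_tendsto_zero (fun _ => EReal.eventually_comap_coe_nhdsLT_mem_Ioo_and_gt) hAb hr
  have hA'_nonpos : ∀ r ∈ s, A' r ≤ 0 := fun r hr =>
    (hderiv r hr).hasDerivWithinAt.nonpos_of_antitoneOn (hs_open.preperfect r hr)
      hAanti.antitoneOn
  have himage : A '' s = Ioi 0 :=
    (image_subset_iff.2 hA_pos).antisymm <| hs_conn.intermediate_value_Ioi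
      (le_principal_iff.2 (EReal.preimage_coe_Ioo_mem_comap_nhdsLT hab))
      (le_principal_iff.2 (EReal.preimage_coe_Ioo_mem_comap_nhdsGT hab))
      (fun x hx => (hderiv x hx).continuousAt.continuousWithinAt) hAb hAa
  have hdensity : (fun r : ℝ => ENNReal.ofReal (if a < (r : EReal) ∧ (r : EReal) < b then
        (-A' r) * B ^ n * (A r) ^ (n - 1) * Real.exp (-(B * A r)) / Real.Gamma n else 0)) =
      s.indicator fun r => ENNReal.ofReal |A' r| * gammaPDF n B (A r) := by
    funext r
    by_cases hr : a < (r : EReal) ∧ (r : EReal) < b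
    · rw [if_pos hr, indicator_of_mem (show r ∈ s from hr), gammaPDF, gammaPDFReal_natCast hn B (hA_pos r hr).le,
        ← ENNReal.ofReal_mul (abs_nonneg _), abs_of_nonpos (hA'_nonpos r hr)]
      ring_nf
    · rw [if_neg hr, indicator_of_notMem (show r ∉ s from hr), ENNReal.ofReal_zero]
  rw [hν, hdensity, withDensity_indicator hs_open.measurableSet,
    map_restrict_withDensity_abs_deriv_mul_comp hs_open.measurableSet hAmeas
      (fun x hx => (hderiv x hx).hasDerivWithinAt) hAanti.injOn,
    himage, restrict_Ioi_withDensity_gammaPDF]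

/-- If `ν` is the distribution of the `n`-th lower record value from the type-II exponential
family (with density `r ↦ (-A'(r)) B^n (A r)^(n-1) exp(-B A r) / Γ(n)` on `(a, b)`), then the
pushforward of `ν` under `A` is the Gamma distribution with shape `n` and rate `B`. -/
theorem record_pushforward_is_gamma (a b : EReal) (hab : a < b)
    (A A' : ℝ → ℝ) (B : ℝ) (hB : 0 < B) (n : ℕ) (hn : 0 < n)
    (hAmeas : Measurable A)
    (hderiv : ∀ x ∈ {x : ℝ | a < (x : EReal) ∧ (x : EReal) < b}, HasDerivAt A (A' x) x)
    (hAanti : StrictAntiOn A {x : ℝ | a < (x : EReal) ∧ (x : EReal) < b})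
    (hAa : Tendsto A (Filter.comap (fun x : ℝ => (x : EReal)) (nhdsWithin a (Set.Ioi a)))
      Filter.atTop)
    (hAb : Tendsto A (Filter.comap (fun x : ℝ => (x : EReal)) (nhdsWithin b (Set.Iio b)))
      (nhds 0))
    (ν : Measure ℝ)
    (hν : ν = volume.withDensity fun r : ℝ => ENNReal.ofReal
      (if a < (r : EReal) ∧ (r : EReal) < b then
        (-A' r) * B ^ n * (A r) ^ (n - 1) * Real.exp (-(B * A r)) / Real.Gamma n
      else 0)) :
    ν.map A = gammaMeasure (n : ℝ) B :=
  record_pushforward_is_gamma_general a b hab A A' B n hn hAmeas hderiv hAanti hAa hAb ν hν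
end

section
/- (Theorem 4, part i) Let B > 0 and c ≥ 0. Then lim_{m→∞} ∫₀^∞ (m/t) · exp(−m·c/t) · B^m t^{m−1} e^{−Bt}/Γ(m) dt = B · exp(−c·B). That is, if Tₘ ~ Gamma(shape m, rate B), then E[(m/Tₘ)·exp(−m·c/Tₘ)] → B·exp(−c·B) as m → ∞; hence the MLE f̂ of the density f(x;θ) = −A′(x)B(θ)exp(−B(θ)A(x)) based on m lower record values is asymptotically unbiased. -/
/-!
With `m = n + 2`, size-biasing the Gamma density, `t · γ(a, r; t) = (a / r) · γ(a + 1, r; t)`,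
turns the integral into `m B / (m - 1) · E[exp(-c m / T)]` with `T ~ Gamma(m - 1, B)`.
Since `E[(T / m - 1 / B)²] = 1 / (m B²) → 0` while `s ↦ exp(-c / s)` is bounded by `1` on `[0, ∞)`
and continuous at `1 / B`, a Chebyshev-type argument gives `E[exp(-c m / T)] → exp(-c B)`.
-/

open MeasureTheory ProbabilityTheory Filter Topology Set

section Concentration

variable {ι Ω : Type*} [MeasurableSpace Ω] {l : Filter ι} {μ : ι → Measure Ω}
  {X : ι → Ω → ℝ} {h : ℝ → ℝ} {x₀ : ℝ}

lemma ContinuousAt.exists_abs_sub_le_add_mul_sq (hcont : ContinuousAt h x₀) {ε : ℝ}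
    (hε : 0 < ε) (M : ℝ) : ∃ C, ∀ x, |h x| ≤ M → |h x - h x₀| ≤ ε + C * (x - x₀) ^ 2 := by
  obtain ⟨δ, hδ, hδε⟩ := Metric.continuousAt_iff.mp hcont ε hε
  refine ⟨(M + |h x₀|) / δ ^ 2, fun x hx => ?_⟩
  have hC : 0 ≤ (M + |h x₀|) / δ ^ 2 := by
    have : 0 ≤ M := (abs_nonneg _).trans hx
    positivity
  rcases lt_or_ge |x - x₀| δ with hnear | hfar
  · have hclose := hδε (by rwa [Real.dist_eq])
    rw [Real.dist_eq] at hclose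
    linarith [mul_nonneg hC (sq_nonneg (x - x₀))]
  · have hsq : δ ^ 2 ≤ (x - x₀) ^ 2 := by
      rw [← sq_abs (x - x₀)]; exact pow_le_pow_left₀ hδ.le hfar 2
    calc |h x - h x₀| ≤ M + |h x₀| := (abs_sub _ _).trans (by linarith)
      _ = (M + |h x₀|) / δ ^ 2 * δ ^ 2 := by field_simp
      _ ≤ (M + |h x₀|) / δ ^ 2 * (x - x₀) ^ 2 := by gcongr
      _ ≤ ε + (M + |h x₀|) / δ ^ 2 * (x - x₀) ^ 2 := by linarith

theorem tendsto_integral_comp_of_tendsto_integral_sq_sub [∀ i, IsProbabilityMeasure (μ i)] {M : ℝ}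
    (hmeas : ∀ i, AEStronglyMeasurable (fun ω => h (X i ω)) (μ i))
    (hbdd : ∀ i, ∀ᵐ ω ∂μ i, |h (X i ω)| ≤ M) (hcont : ContinuousAt h x₀)
    (hsq : ∀ i, Integrable (fun ω => (X i ω - x₀) ^ 2) (μ i))
    (hvar : Tendsto (fun i => ∫ ω, (X i ω - x₀) ^ 2 ∂μ i) l (𝓝 0)) :
    Tendsto (fun i => ∫ ω, h (X i ω) ∂μ i) l (𝓝 (h x₀)) := by
  refine Metric.tendsto_nhds.mpr fun ε hε => ?_
  obtain ⟨C, hC⟩ := hcont.exists_abs_sub_le_add_mul_sq (half_pos hε) M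
  have hsmall : ∀ᶠ i in l, C * ∫ ω, (X i ω - x₀) ^ 2 ∂μ i < ε / 2 := by
    have := hvar.const_mul C
    rw [mul_zero] at this
    exact this.eventually (gt_mem_nhds (half_pos hε))
  filter_upwards [hsmall] with i hi
  have hint : Integrable (fun ω => h (X i ω)) (μ i) :=
    Integrable.of_bound (hmeas i) M (by simpa only [Real.norm_eq_abs] using hbdd i)
  have hdev : |∫ ω, h (X i ω) ∂μ i - h x₀| ≤ ε / 2 + C * ∫ ω, (X i ω - x₀) ^ 2 ∂μ i :=
    calc |∫ ω, h (X i ω) ∂μ i - h x₀| = ‖∫ ω, (h (X i ω) - h x₀) ∂μ i‖ := by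
          rw [integral_sub hint (integrable_const _), integral_const, probReal_univ, one_smul,
            Real.norm_eq_abs]
      _ ≤ ∫ ω, (ε / 2 + C * (X i ω - x₀) ^ 2) ∂μ i :=
          norm_integral_le_of_norm_le ((integrable_const _).add ((hsq i).const_mul C))
            (by filter_upwards [hbdd i] with ω hω using hC _ hω)
      _ = ε / 2 + C * ∫ ω, (X i ω - x₀) ^ 2 ∂μ i := by
          rw [integral_add (integrable_const _) ((hsq i).const_mul C), integral_const,
            integral_const_mul, probReal_univ, one_smul]
  rw [Real.dist_eq]
  linarith

end Concentration

namespace ProbabilityTheory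

variable {a r : ℝ}

lemma measurable_gammaPDF : Measurable (gammaPDF a r) :=
  (measurable_gammaPDFReal a r).ennreal_ofReal

lemma gammaPDFReal_natCast_of_nonneg {m : ℕ} (hm : 1 ≤ m) {x : ℝ} (hx : 0 ≤ x) :
    gammaPDFReal m r x = r ^ m * x ^ (m - 1) * Real.exp (-(r * x)) / Real.Gamma m := by
  rw [gammaPDFReal, if_pos hx, Real.rpow_natCast, ← Nat.cast_one, ← Nat.cast_sub hm,
    Real.rpow_natCast]
  ring

lemma gammaPDFReal_mul_self (ha : 0 < a) (hr : 0 < r) (x : ℝ) :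
    gammaPDFReal a r x * x = a / r * gammaPDFReal (a + 1) r x := by
  unfold gammaPDFReal
  split_ifs with hx
  · rw [Real.Gamma_add_one ha.ne', Real.rpow_add_one hr.ne', add_sub_cancel_right,
      ← sub_add_cancel a 1, Real.rpow_add_one' hx (by simpa using ha.ne'), sub_add_cancel]
    field_simp
  · simp

lemma ae_nonneg_gammaMeasure : ∀ᵐ x ∂gammaMeasure a r, 0 ≤ x := by
  refine (ae_withDensity_iff measurable_gammaPDF).mpr (ae_of_all _ fun x hx => ?_)
  by_contra hneg
  exact hx (gammaPDF_of_neg (not_le.mp hneg))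

lemma integral_gammaMeasure (ha : 0 < a) (hr : 0 < r) (f : ℝ → ℝ) :
    ∫ x, f x ∂gammaMeasure a r = ∫ x in Ioi 0, gammaPDFReal a r x * f x := by
  rw [gammaMeasure, integral_withDensity_eq_integral_toReal_smul measurable_gammaPDF
    (ae_of_all _ fun _ => ENNReal.ofReal_lt_top), ← integral_Ici_eq_integral_Ioi]
  simp_rw [gammaPDF, ENNReal.toReal_ofReal (gammaPDFReal_nonneg ha hr _), smul_eq_mul]
  refine (setIntegral_eq_integral_of_forall_compl_eq_zero fun x hx => ?_).symm
  simp [gammaPDFReal, if_neg (show ¬ 0 ≤ x from hx)]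

lemma integrable_gammaMeasure_iff (ha : 0 < a) (hr : 0 < r) {f : ℝ → ℝ} :
    Integrable f (gammaMeasure a r) ↔ Integrable (fun x => gammaPDFReal a r x * f x) := by
  rw [gammaMeasure, integrable_withDensity_iff_integrable_smul' measurable_gammaPDF
    (ae_of_all _ fun _ => ENNReal.ofReal_lt_top)]
  simp_rw [gammaPDF, ENNReal.toReal_ofReal (gammaPDFReal_nonneg ha hr _), smul_eq_mul]

lemma integral_mul_gammaMeasure (ha : 0 < a) (hr : 0 < r) (f : ℝ → ℝ) :
    ∫ x, x * f x ∂gammaMeasure a r = a / r * ∫ x, f x ∂gammaMeasure (a + 1) r := by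
  rw [integral_gammaMeasure ha hr, integral_gammaMeasure (by linarith) hr, ← integral_const_mul]
  congr 1 with x
  rw [← mul_assoc, gammaPDFReal_mul_self ha hr, mul_assoc]

lemma integrable_mul_gammaMeasure_iff (ha : 0 < a) (hr : 0 < r) {f : ℝ → ℝ} :
    Integrable (fun x => x * f x) (gammaMeasure a r) ↔ Integrable f (gammaMeasure (a + 1) r) := by
  rw [integrable_gammaMeasure_iff ha hr, integrable_gammaMeasure_iff (by linarith) hr]
  simp_rw [← mul_assoc, gammaPDFReal_mul_self ha hr, mul_assoc]
  exact integrable_const_mul_iff (IsUnit.mk0 _ (by positivity)) _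

lemma integral_inv_mul_gammaMeasure (ha : 0 < a) (hr : 0 < r) (f : ℝ → ℝ) :
    ∫ x, x⁻¹ * f x ∂gammaMeasure (a + 1) r = r / a * ∫ x, f x ∂gammaMeasure a r := by
  have hcancel : ∫ x, x * (x⁻¹ * f x) ∂gammaMeasure a r = ∫ x, f x ∂gammaMeasure a r := by
    simp_rw [integral_gammaMeasure ha hr]
    refine setIntegral_congr_fun measurableSet_Ioi fun x (hx : 0 < x) => ?_
    rw [mul_inv_cancel_left₀ hx.ne']
  rw [← hcancel, integral_mul_gammaMeasure ha hr]
  field_simp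

lemma integrable_id_gammaMeasure (ha : 0 < a) (hr : 0 < r) :
    Integrable (fun x => x) (gammaMeasure a r) := by
  have := isProbabilityMeasure_gammaMeasure (ha.trans (lt_add_one a)) hr
  simpa using (integrable_mul_gammaMeasure_iff ha hr (f := fun _ => 1)).mpr (integrable_const 1)

lemma integral_id_gammaMeasure (ha : 0 < a) (hr : 0 < r) :
    ∫ x, x ∂gammaMeasure a r = a / r := by
  have := isProbabilityMeasure_gammaMeasure (ha.trans (lt_add_one a)) hr
  simpa using integral_mul_gammaMeasure ha hr (fun _ => 1)

lemma integrable_mul_sub_gammaMeasure (ha : 0 < a) (hr : 0 < r) (y : ℝ) :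
    Integrable (fun x => x * (x - y)) (gammaMeasure a r) := by
  have ha' : 0 < a + 1 := ha.trans (lt_add_one a)
  have := isProbabilityMeasure_gammaMeasure ha' hr
  exact (integrable_mul_gammaMeasure_iff ha hr).mpr
    ((integrable_id_gammaMeasure ha' hr).sub (integrable_const y))

lemma integrable_sq_sub_gammaMeasure (ha : 0 < a) (hr : 0 < r) (y : ℝ) :
    Integrable (fun x => (x - y) ^ 2) (gammaMeasure a r) := by
  have := isProbabilityMeasure_gammaMeasure ha hr
  refine ((integrable_mul_sub_gammaMeasure ha hr (2 * y)).add (integrable_const (y ^ 2))).congr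
    (ae_of_all _ fun x => ?_)
  simp only [Pi.add_apply]
  ring

lemma integral_sq_sub_gammaMeasure (ha : 0 < a) (hr : 0 < r) (y : ℝ) :
    ∫ x, (x - y) ^ 2 ∂gammaMeasure a r = a / r ^ 2 + (a / r - y) ^ 2 := by
  have ha' : 0 < a + 1 := ha.trans (lt_add_one a)
  have := isProbabilityMeasure_gammaMeasure ha hr
  have := isProbabilityMeasure_gammaMeasure ha' hr
  have hexpand : (fun x : ℝ => (x - y) ^ 2) = fun x => x * (x - 2 * y) + y ^ 2 := by
    ext x; ring
  rw [hexpand, integral_add (integrable_mul_sub_gammaMeasure ha hr _) (integrable_const _),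
    integral_mul_gammaMeasure ha hr, integral_sub (integrable_id_gammaMeasure ha' hr)
      (integrable_const _), integral_id_gammaMeasure ha' hr]
  simp only [integral_const, probReal_univ, one_smul]
  field_simp
  ring

end ProbabilityTheory

lemma integral_density_mle_eq {B : ℝ} (hB : 0 < B) (c : ℝ) (n : ℕ) :
    ∫ t in Ioi (0 : ℝ), (((n + 2 : ℕ) : ℝ) / t) * Real.exp (-(((n + 2 : ℕ) : ℝ) * c / t)) *
        (B ^ (n + 2) * t ^ (n + 2 - 1) * Real.exp (-(B * t)) / Real.Gamma ((n + 2 : ℕ) : ℝ)) =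
      ((n : ℝ) + 2) / (n + 1) * B *
        ∫ x, Real.exp (-(c / (x / (n + 2)))) ∂gammaMeasure (n + 1) B := by
  have hshape : ((n + 2 : ℕ) : ℝ) = (n + 1 : ℝ) + 1 := by push_cast; ring
  calc _ = ∫ t in Ioi 0, gammaPDFReal ((n + 1 : ℝ) + 1) B t *
          (t⁻¹ * ((n + 2) * Real.exp (-(c / (t / (n + 2)))))) := by
        refine setIntegral_congr_fun measurableSet_Ioi fun t (ht : 0 < t) => ?_
        rw [← hshape, gammaPDFReal_natCast_of_nonneg (by omega) ht.le]
        push_cast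
        field_simp
    _ = B / (n + 1) * ∫ x, (n + 2) * Real.exp (-(c / (x / (n + 2)))) ∂gammaMeasure (n + 1) B := by
        rw [← integral_gammaMeasure (by positivity) hB, integral_inv_mul_gammaMeasure
          (by positivity) hB]
    _ = _ := by
        rw [integral_const_mul]
        ring

lemma tendsto_integral_exp_neg_div_gammaMeasure {B c : ℝ} (hB : 0 < B) (hc : 0 ≤ c) :
    Tendsto (fun n : ℕ => ∫ x, Real.exp (-(c / (x / (n + 2)))) ∂gammaMeasure (n + 1) B) atTop
      (𝓝 (Real.exp (-(c * B)))) := by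
  have hshape_pos (n : ℕ) : (0 : ℝ) < n + 1 := by positivity
  have := fun n : ℕ => isProbabilityMeasure_gammaMeasure (hshape_pos n) hB
  have hrescale (n : ℕ) (x : ℝ) :
      (x / (n + 2) - 1 / B) ^ 2 = (x - (n + 2) / B) ^ 2 / ((n : ℝ) + 2) ^ 2 := by
    field_simp
  have hbdd (n : ℕ) : ∀ᵐ x ∂gammaMeasure (n + 1) B, |Real.exp (-(c / (x / (n + 2))))| ≤ 1 := by
    filter_upwards [ae_nonneg_gammaMeasure] with x hx
    rw [abs_of_pos (Real.exp_pos _), Real.exp_le_one_iff, neg_nonpos]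
    positivity
  have hsq (n : ℕ) : Integrable (fun x => (x / (n + 2) - 1 / B) ^ 2) (gammaMeasure (n + 1) B) := by
    simp_rw [hrescale]
    exact (integrable_sq_sub_gammaMeasure (hshape_pos n) hB _).div_const _
  have hvar : Tendsto (fun n : ℕ => ∫ x, (x / (n + 2) - 1 / B) ^ 2 ∂gammaMeasure (n + 1) B)
      atTop (𝓝 0) := by
    have hvar_eq (n : ℕ) : ∫ x, (x / (n + 2) - 1 / B) ^ 2 ∂gammaMeasure (n + 1) B =
        1 / (((n : ℝ) + 2) * B ^ 2) := by
      simp_rw [hrescale, integral_div]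
      rw [integral_sq_sub_gammaMeasure (hshape_pos n) hB]
      field_simp
      ring
    simp_rw [hvar_eq]
    refine tendsto_const_nhds.div_atTop (Tendsto.atTop_mul_const (by positivity) ?_)
    exact tendsto_atTop_add_const_right _ _ tendsto_natCast_atTop_atTop
  simpa only [div_div_eq_mul_div, div_one] using tendsto_integral_comp_of_tendsto_integral_sq_sub
    (h := fun s => Real.exp (-(c / s))) (fun n => (by fun_prop : Measurable _).aestronglyMeasurable)
    hbdd (by fun_prop (disch := positivity)) hsq hvar

/-- Theorem 4, part i: if `Tₘ ~ Gamma(shape m, rate B)` then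
`E[(m / Tₘ) exp(-m c / Tₘ)] → B exp(-c B)` as `m → ∞`; the MLE of the density based on `m`
lower record values is asymptotically unbiased. -/
theorem pdf_mle_asymptotically_unbiased (B c : ℝ) (hB : 0 < B) (hc : 0 ≤ c) :
    Tendsto (fun m : ℕ =>
        ∫ t in Set.Ioi (0 : ℝ), ((m : ℝ) / t) * Real.exp (-((m : ℝ) * c / t)) *
          (B ^ m * t ^ (m - 1) * Real.exp (-(B * t)) / Real.Gamma (m : ℝ)))
      atTop (nhds (B * Real.exp (-(c * B)))) := by
  rw [← tendsto_add_atTop_iff_nat 2]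
  have hfactor : Tendsto (fun n : ℕ => ((n : ℝ) + 2) / (n + 1) * B) atTop (𝓝 B) := by
    have := (tendsto_one_div_add_atTop_nhds_zero_nat.const_add 1).mul_const B
    rw [add_zero, one_mul] at this
    refine this.congr fun n => ?_
    field_simp
    ring
  simpa only [integral_density_mle_eq hB] using
    hfactor.mul (tendsto_integral_exp_neg_div_gammaMeasure hB hc)
end

section
/- Let B > 0 and c ≥ 0. Then lim_{m→∞} ∫₀^∞ exp(−2m·c/t) · B^m t^{m−1} e^{−Bt}/Γ(m) dt = exp(−2c·B). That is, if Tₘ ~ Gamma(shape m, rate B), then the second moment E[(exp(−m·c/Tₘ))²] of the MLE of the CDF converges to (exp(−c·B))², so the variance of the CDF estimator tends to 0 as m → ∞. -/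
/-!
If `T ~ Gamma(m, B)` and `X = 2mc/T`, the inverse moments of the Gamma law give
`E X = 2cB · m/(m-1)` and `E X² = (2cB)² · m²/((m-1)(m-2))`, so `X → y := 2cB` in mean square.
On `[0, ∞)` the function `exp (-x)` lies above its tangent line at `y` and below that tangent
line plus `(x - y)²`; integrating, `E exp(-X)` differs from `exp(-y) (1 - (E X - y))` by at most
`E (X - y)²`, and both of these converge to `exp(-y)`.
-/

open MeasureTheory Filter Topology Set

namespace Real

theorem exp_neg_mul_sub_le_exp_neg (x y : ℝ) : exp (-y) * (1 + y - x) ≤ exp (-x) := by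
  have h : exp (-y) * exp (y - x) = exp (-x) := by rw [← exp_add]; ring_nf
  rw [← h]
  gcongr
  linarith [add_one_le_exp (y - x)]

theorem exp_neg_le_mul_sub_add_sq {x y : ℝ} (hx : 0 ≤ x) (hy : 0 ≤ y) :
    exp (-x) ≤ exp (-y) * (1 + y - x) + (x - y) ^ 2 := by
  have hx1 : exp (-x) ≤ 1 := exp_le_one_iff.mpr (by linarith)
  have hy1 : exp (-y) ≤ 1 := exp_le_one_iff.mpr (by linarith)
  have hexp : exp (-x) * exp (x - y) = exp (-y) := by rw [← exp_add]; ring_nf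
  have hxy : exp (-x) * (1 + (x - y)) ≤ exp (-y) := by
    rw [← hexp]; gcongr; linarith [add_one_le_exp (x - y)]
  rcases le_or_gt (x - y) 1 with h | h
  · nlinarith [exp_pos (-x), exp_pos (-y)]
  · nlinarith [exp_pos (-x), exp_pos (-y)]

end Real

section Moments

variable {α : Type*} [MeasurableSpace α] {μ : Measure α} {ρ X : α → ℝ}

theorem integrable_exp_neg_mul (hρ : 0 ≤ᵐ[μ] ρ) (hX : 0 ≤ᵐ[μ] X)
    (hXm : AEStronglyMeasurable X μ) (h0 : Integrable ρ μ) :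
    Integrable (fun x => Real.exp (-X x) * ρ x) μ := by
  refine h0.mono' ((Real.continuous_exp.comp_aestronglyMeasurable hXm.neg).mul h0.1) ?_
  filter_upwards [hρ, hX] with x hρx hXx
  rw [norm_mul, Real.norm_of_nonneg (Real.exp_pos _).le, Real.norm_of_nonneg hρx]
  exact mul_le_of_le_one_left hρx (Real.exp_le_one_iff.mpr (by simpa using hXx))

theorem abs_integral_exp_neg_mul_sub_le {y : ℝ} (hy : 0 ≤ y) (hρ : 0 ≤ᵐ[μ] ρ)
    (hX : 0 ≤ᵐ[μ] X) (hXm : AEStronglyMeasurable X μ) (h0 : Integrable ρ μ)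
    (h1 : Integrable (fun x => X x * ρ x) μ) (h2 : Integrable (fun x => X x ^ 2 * ρ x) μ) :
    |∫ x, Real.exp (-X x) * ρ x ∂μ
        - Real.exp (-y) * ((1 + y) * ∫ x, ρ x ∂μ - ∫ x, X x * ρ x ∂μ)|
      ≤ ∫ x, X x ^ 2 * ρ x ∂μ - 2 * y * ∫ x, X x * ρ x ∂μ + y ^ 2 * ∫ x, ρ x ∂μ := by
  set L := fun x => Real.exp (-y) * (1 + y - X x) * ρ x
  set Q := fun x => (X x - y) ^ 2 * ρ x
  have hE := integrable_exp_neg_mul hρ hX hXm h0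
  have hL : Integrable L μ :=
    ((h0.const_mul (Real.exp (-y) * (1 + y))).sub (h1.const_mul (Real.exp (-y)))).congr
      (ae_of_all _ fun x => by simp only [L, Pi.sub_apply]; ring)
  have hQ : Integrable Q μ :=
    ((h2.sub (h1.const_mul (2 * y))).add (h0.const_mul (y ^ 2))).congr
      (ae_of_all _ fun x => by simp only [Q, Pi.add_apply, Pi.sub_apply]; ring)
  have hL_eq :
      ∫ x, L x ∂μ = Real.exp (-y) * ((1 + y) * ∫ x, ρ x ∂μ - ∫ x, X x * ρ x ∂μ) := by
    rw [← integral_const_mul, ← integral_sub (h0.const_mul _) h1, ← integral_const_mul]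
    congr 1 with x
    simp only [L]
    ring
  have hQ_eq : ∫ x, Q x ∂μ
      = ∫ x, X x ^ 2 * ρ x ∂μ - 2 * y * ∫ x, X x * ρ x ∂μ + y ^ 2 * ∫ x, ρ x ∂μ := by
    have h21 : Integrable (fun x => X x ^ 2 * ρ x - 2 * y * (X x * ρ x)) μ :=
      h2.sub (h1.const_mul _)
    rw [← integral_const_mul, ← integral_const_mul, ← integral_sub h2 (h1.const_mul _),
      ← integral_add h21 (h0.const_mul _)]
    congr 1 with x
    simp only [Q]
    ring
  have hlower : ∫ x, L x ∂μ ≤ ∫ x, Real.exp (-X x) * ρ x ∂μ := by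
    refine integral_mono_ae hL hE ?_
    filter_upwards [hρ] with x hρx
    exact mul_le_mul_of_nonneg_right (Real.exp_neg_mul_sub_le_exp_neg _ _) hρx
  have hupper : ∫ x, Real.exp (-X x) * ρ x ∂μ ≤ ∫ x, L x ∂μ + ∫ x, Q x ∂μ := by
    rw [← integral_add hL hQ]
    refine integral_mono_ae hE (hL.add hQ) ?_
    filter_upwards [hρ, hX] with x hρx hXx
    simp only [L, Q, ← add_mul]
    exact mul_le_mul_of_nonneg_right (Real.exp_neg_le_mul_sub_add_sq hXx hy) hρx
  rw [← hL_eq, ← hQ_eq, abs_sub_le_iff]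
  constructor <;> linarith [integral_nonneg_of_ae (μ := μ) (f := Q) <| by
    filter_upwards [hρ] with x hρx using mul_nonneg (sq_nonneg _) hρx]

theorem tendsto_integral_exp_neg_mul_of_tendsto_moments {ρ X : ℕ → α → ℝ} {y : ℝ}
    (hy : 0 ≤ y) (hρ : ∀ m, 0 ≤ᵐ[μ] ρ m) (hX : ∀ m, 0 ≤ᵐ[μ] X m)
    (hXm : ∀ m, AEStronglyMeasurable (X m) μ)
    (hint : ∀ k ≤ 2, ∀ᶠ m in atTop, Integrable (fun x => X m x ^ k * ρ m x) μ)
    (hlim : ∀ k ≤ 2, Tendsto (fun m => ∫ x, X m x ^ k * ρ m x ∂μ) atTop (𝓝 (y ^ k))) :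
    Tendsto (fun m => ∫ x, Real.exp (-X m x) * ρ m x ∂μ) atTop (𝓝 (Real.exp (-y))) := by
  obtain ⟨h0, h1, h2⟩ : _ ∧ _ ∧ _ :=
    ⟨hint 0 (by norm_num), hint 1 (by norm_num), hint 2 le_rfl⟩
  obtain ⟨l0, l1, l2⟩ : _ ∧ _ ∧ _ :=
    ⟨hlim 0 (by norm_num), hlim 1 (by norm_num), hlim 2 le_rfl⟩
  simp only [pow_zero, one_mul, pow_one] at h0 h1 l0 l1
  set tangent := fun m => Real.exp (-y) * ((1 + y) * ∫ x, ρ m x ∂μ - ∫ x, X m x * ρ m x ∂μ)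
  have htangent : Tendsto tangent atTop (𝓝 (Real.exp (-y))) := by
    simpa using ((l0.const_mul (1 + y)).sub l1).const_mul (Real.exp (-y))
  have herr : Tendsto (fun m => ∫ x, X m x ^ 2 * ρ m x ∂μ - 2 * y * ∫ x, X m x * ρ m x ∂μ
      + y ^ 2 * ∫ x, ρ m x ∂μ) atTop (𝓝 0) := by
    convert (l2.sub (l1.const_mul (2 * y))).add (l0.const_mul (y ^ 2)) using 2
    ring
  have hdiff := squeeze_zero_norm'
      (f := fun m => ∫ x, Real.exp (-X m x) * ρ m x ∂μ - tangent m) (by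
    filter_upwards [h0, h1, h2] with m h0m h1m h2m
    exact abs_integral_exp_neg_mul_sub_le hy (hρ m) (hX m) (hXm m) h0m h1m h2m) herr
  simpa using htangent.add hdiff

end Moments

/-- `ProbabilityTheory.gammaPDFReal n r` on `(0, ∞)`, with the shape a natural number and `pow`
in place of `rpow`. -/
noncomputable def gammaDensity (r : ℝ) (n : ℕ) (t : ℝ) : ℝ :=
  r ^ n * t ^ (n - 1) * Real.exp (-(r * t)) / Real.Gamma n

section GammaDensity

variable {r : ℝ} {n k : ℕ}

theorem gammaDensity_nonneg (hr : 0 ≤ r) {t : ℝ} (ht : 0 ≤ t) : 0 ≤ gammaDensity r n t := by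
  unfold gammaDensity
  positivity

theorem inv_pow_mul_gammaDensity_eq (hkn : k < n) {t : ℝ} (ht : 0 < t) :
    (t ^ k)⁻¹ * gammaDensity r n t
      = r ^ n / Real.Gamma n * (t ^ ((n - k : ℝ) - 1) * Real.exp (-(r * t))) := by
  have hpow : t ^ ((n - k : ℝ) - 1) = t ^ (n - 1) / t ^ k := by
    rw [show (n - k : ℝ) - 1 = ((n - 1 : ℕ) : ℝ) - k by push_cast [Nat.one_le_of_lt hkn]; ring,
      Real.rpow_sub ht, Real.rpow_natCast, Real.rpow_natCast]
  rw [hpow, gammaDensity]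
  ring

theorem integrableOn_inv_pow_mul_gammaDensity (hr : 0 < r) (hkn : k < n) :
    IntegrableOn (fun t => (t ^ k)⁻¹ * gammaDensity r n t) (Ioi 0) := by
  have hs : -1 < (n - k : ℝ) - 1 := by
    have : (k : ℝ) < n := by exact_mod_cast hkn
    linarith
  have h : IntegrableOn (fun t => r ^ n / Real.Gamma n *
      (t ^ ((n - k : ℝ) - 1) * Real.exp (-r * t ^ (1 : ℝ)))) (Ioi 0) :=
    (integrableOn_rpow_mul_exp_neg_mul_rpow hs zero_lt_one hr).const_mul _
  refine h.congr_fun (fun t ht => ?_) measurableSet_Ioi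
  simp only [Real.rpow_one, neg_mul, inv_pow_mul_gammaDensity_eq hkn ht]

theorem integral_inv_pow_mul_gammaDensity (hr : 0 < r) (hkn : k < n) :
    ∫ t in Ioi 0, (t ^ k)⁻¹ * gammaDensity r n t
      = r ^ k * Real.Gamma (n - k) / Real.Gamma n := by
  have ha : (0 : ℝ) < n - k := sub_pos.mpr (by exact_mod_cast hkn)
  rw [setIntegral_congr_fun measurableSet_Ioi fun t ht => inv_pow_mul_gammaDensity_eq hkn ht,
    integral_const_mul, Real.integral_rpow_mul_exp_neg_mul_Ioi ha hr]
  have hrpow : r ^ n * (1 / r) ^ (n - k : ℝ) = r ^ k := by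
    rw [one_div, Real.inv_rpow hr.le, ← Real.rpow_neg hr.le, ← Real.rpow_natCast,
      ← Real.rpow_add hr, ← Real.rpow_natCast]
    ring_nf
  rw [← hrpow]
  ring

theorem integrableOn_div_pow_mul_gammaDensity (hr : 0 < r) (b : ℝ) (hkn : k < n) :
    IntegrableOn (fun t => (b * n / t) ^ k * gammaDensity r n t) (Ioi 0) := by
  simp_rw [div_pow, div_eq_mul_inv _ (_ ^ k), mul_assoc]
  exact (integrableOn_inv_pow_mul_gammaDensity hr hkn).const_mul _

theorem tendsto_pow_mul_Gamma_sub_div_Gamma (k : ℕ) :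
    Tendsto (fun n : ℕ => (n : ℝ) ^ k * Real.Gamma (n - k) / Real.Gamma n) atTop (𝓝 1) := by
  induction k with
  | zero =>
    refine tendsto_const_nhds.congr' ?_
    filter_upwards [eventually_gt_atTop 0] with n hn
    have : (0 : ℝ) < n := by exact_mod_cast hn
    simp [(Real.Gamma_pos_of_pos this).ne']
  | succ k ih =>
    refine (one_mul (1 : ℝ) ▸ (tendsto_natCast_div_add_atTop (-(k + 1 : ℝ))).mul ih).congr' ?_
    filter_upwards [eventually_gt_atTop (k + 1)] with n hn
    have hnk : (0 : ℝ) < n - (k + 1) := sub_pos.mpr (by exact_mod_cast hn)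
    have hΓ : Real.Gamma (n - k) = (n - (k + 1)) * Real.Gamma (n - (k + 1)) := by
      rw [← Real.Gamma_add_one hnk.ne']
      ring_nf
    rw [hΓ, Nat.cast_succ, ← sub_eq_add_neg]
    field_simp
    ring

theorem tendsto_integral_div_pow_mul_gammaDensity (hr : 0 < r) (b : ℝ) (k : ℕ) :
    Tendsto (fun n : ℕ => ∫ t in Ioi 0, (b * n / t) ^ k * gammaDensity r n t) atTop
      (𝓝 ((b * r) ^ k)) := by
  have h := (tendsto_pow_mul_Gamma_sub_div_Gamma k).const_mul ((b * r) ^ k)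
  rw [mul_one] at h
  refine h.congr' ?_
  filter_upwards [eventually_gt_atTop k] with n hkn
  simp_rw [div_pow, div_eq_mul_inv _ (_ ^ k), mul_assoc]
  rw [integral_const_mul, integral_inv_pow_mul_gammaDensity hr hkn]
  ring

end GammaDensity

/-- If `Tₘ ~ Gamma(shape m, rate B)` then the second moment of the CDF estimator,
`E[exp(-m c / Tₘ)²] = E[exp(-2 m c / Tₘ)]`, converges to `exp(-2 c B) = (exp(-c B))²`. -/
theorem cdf_mle_second_moment_limit (B c : ℝ) (hB : 0 < B) (hc : 0 ≤ c) :
    Tendsto (fun m : ℕ =>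
        ∫ t in Set.Ioi (0 : ℝ), Real.exp (-(2 * (m : ℝ) * c / t)) *
          (B ^ m * t ^ (m - 1) * Real.exp (-(B * t)) / Real.Gamma (m : ℝ)))
      atTop (nhds (Real.exp (-(2 * c * B)))) := by
  have hreorder : ∀ (m : ℕ) (t : ℝ), 2 * (m : ℝ) * c / t = 2 * c * m / t :=
    fun m t => by ring
  simp_rw [hreorder]
  refine tendsto_integral_exp_neg_mul_of_tendsto_moments (μ := volume.restrict (Ioi 0))
    (ρ := fun m => gammaDensity B m) (X := fun m t => 2 * c * m / t) (by positivity)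
    (fun m => ?_) (fun m => ?_) (fun m => by fun_prop) (fun k _ => ?_)
    (fun k _ => tendsto_integral_div_pow_mul_gammaDensity hB (2 * c) k)
  · filter_upwards [ae_restrict_mem measurableSet_Ioi] with t ht
    exact gammaDensity_nonneg hB.le ht.le
  · filter_upwards [ae_restrict_mem measurableSet_Ioi] with t ht
    exact div_nonneg (by positivity) ht.le
  · filter_upwards [eventually_gt_atTop k] with m hkm
    exact integrableOn_div_pow_mul_gammaDensity hB (2 * c) hkm
end
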